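/- The dynamic minimum-cost network flow problem in arc-chain form and its multi-marginal optimal transport formulation have the same optimal value: if the OT problem min ⟨C,M⟩ over M ∈ ℝ≥0^{n^T} with P₁(M) = μ₁, P_T(M) = μ_T, P_t(M) ≤ d for t = 2,…,T−1 (with C_{i₁…i_T} = Σ_t c_{i_t} + Σ_t C_{i_t i_{t+1}}, C_{ij} = 0 if edge i leads to edge j and ∞ otherwise) has a feasible solution with finite objective, then its optimum is finite and equals the optimum of the arc-chain flow LP; moreover an optimal M is supported on feasible paths and yields an optimal arc-chain solution via x_p = M_{i₁…i_T} for p = (i₁,…,i_T) ∈ 𝒫. -/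

import Mathlib

open scoped NNReal ENNReal

namespace Stmt14

/-- A tuple of `T+2` edges is a feasible path if each edge leads to the next. -/
def IsPath (T n : ℕ) (leads : Fin n → Fin n → Prop) (x : Fin (T + 2) → Fin n) : Prop :=
  ∀ s : Fin (T + 1), leads (x s.castSucc) (x s.succ)

/-- The extended-real cost tensor `C_{i₁…i_T} = Σ_t c_{i_t} + Σ_t C_{i_t i_{t+1}}`
with `C_{ij} = 0` if edge `i` leads to edge `j` and `∞` otherwise. -/
noncomputable def Ccost (T n : ℕ) (c : Fin n → ℝ≥0) (leads : Fin n → Fin n → Prop)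
    [DecidableRel leads] (x : Fin (T + 2) → Fin n) : ℝ≥0∞ :=
  (∑ t : Fin (T + 2), (c (x t) : ℝ≥0∞)) +
    ∑ s : Fin (T + 1), (if leads (x s.castSucc) (x s.succ) then 0 else ⊤)

/-- Objective `⟨C, M⟩` of the OT formulation, valued in `ℝ≥0∞`. -/
noncomputable def otObj (T n : ℕ) (c : Fin n → ℝ≥0) (leads : Fin n → Fin n → Prop)
    [DecidableRel leads] (M : (Fin (T + 2) → Fin n) → ℝ≥0) : ℝ≥0∞ :=
  ∑ x : Fin (T + 2) → Fin n, Ccost T n c leads x * (M x : ℝ≥0∞)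

/-- Feasibility for the OT formulation: `P₁(M) = μ₁`, `P_T(M) = μ_T`, and
`P_t(M) ≤ d` for the intermediate marginals. -/
def otFeas (T n : ℕ) (μ₁ μT d : Fin n → ℝ≥0)
    (M : (Fin (T + 2) → Fin n) → ℝ≥0) : Prop :=
  (∀ i, (∑ x : Fin (T + 2) → Fin n, if x 0 = i then M x else 0) = μ₁ i) ∧
  (∀ i, (∑ x : Fin (T + 2) → Fin n,
      if x (Fin.last (T + 1)) = i then M x else 0) = μT i) ∧
  ∀ (t : Fin T) (i : Fin n),
    (∑ x : Fin (T + 2) → Fin n, if x t.succ.castSucc = i then M x else 0) ≤ d i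

/-- Arc-chain cost of a path: `c_p = Σ_t c_{p_t}`. -/
def pathCost (T n : ℕ) (c : Fin n → ℝ≥0) (x : Fin (T + 2) → Fin n) : ℝ≥0 :=
  ∑ t : Fin (T + 2), c (x t)

/-- Arc-chain objective. -/
def lpObj (T n : ℕ) (c : Fin n → ℝ≥0) (xs : (Fin (T + 2) → Fin n) → ℝ≥0) : ℝ≥0 :=
  ∑ x : Fin (T + 2) → Fin n, pathCost T n c x * xs x

/-- Feasibility for the arc-chain LP: the flow is supported on feasible paths and
satisfies the supply, demand and capacity constraints. -/
def lpFeas (T n : ℕ) (leads : Fin n → Fin n → Prop) (μ₁ μT d : Fin n → ℝ≥0)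
    (xs : (Fin (T + 2) → Fin n) → ℝ≥0) : Prop :=
  (∀ x, ¬ IsPath T n leads x → xs x = 0) ∧ otFeas T n μ₁ μT d xs

lemma obj_eq_of_supported (T n : ℕ) (c : Fin n → ℝ≥0) (leads : Fin n → Fin n → Prop)
    [DecidableRel leads] (M : (Fin (T + 2) → Fin n) → ℝ≥0)
    (h : ∀ x, ¬ IsPath T n leads x → M x = 0) :
    otObj T n c leads M = (lpObj T n c M : ℝ≥0∞) := by
  unfold otObj lpObj
  push_cast
  refine Finset.sum_congr rfl ?_
  intro x _
  by_cases hM : M x = 0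
  · simp [hM]
  · have hx : IsPath T n leads x := by
      by_contra h'; exact hM (h x h')
    have hC : Ccost T n c leads x = (pathCost T n c x : ℝ≥0∞) := by
      unfold Ccost pathCost
      have h0 : ∀ s : Fin (T+1),
          (if leads (x s.castSucc) (x s.succ) then (0:ℝ≥0∞) else ⊤) = 0 :=
        fun s => if_pos (hx s)
      simp only [h0, Finset.sum_const_zero, add_zero]
      push_cast
      try rfl
    rw [hC]
    try push_cast
    try rfl

lemma obj_top (T n : ℕ) (c : Fin n → ℝ≥0) (leads : Fin n → Fin n → Prop)
    [DecidableRel leads] (M : (Fin (T + 2) → Fin n) → ℝ≥0)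
    (x0 : Fin (T + 2) → Fin n) (hx : ¬ IsPath T n leads x0) (hM : M x0 ≠ 0) :
    otObj T n c leads M = ⊤ := by
  unfold IsPath at hx
  push_neg at hx
  obtain ⟨s, hs⟩ := hx
  have hC : Ccost T n c leads x0 = ⊤ := by
    unfold Ccost
    have : (∑ s' : Fin (T + 1),
        (if leads (x0 s'.castSucc) (x0 s'.succ) then (0:ℝ≥0∞) else ⊤)) = ⊤ := by
      rw [ENNReal.sum_eq_top]
      exact ⟨s, Finset.mem_univ s, by simp [hs]⟩
    rw [this]; simp
  unfold otObj
  rw [ENNReal.sum_eq_top]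
  exact ⟨x0, Finset.mem_univ x0, by rw [hC, ENNReal.top_mul (by exact_mod_cast hM)]⟩


/-- Equivalence of the dynamic minimum-cost flow problem (arc-chain form) and its
multi-marginal OT formulation: if the OT problem has a feasible point with finite
objective, then it has an optimal solution with finite optimal value; moreover any
optimal OT plan is supported on feasible paths and, read as an arc-chain flow, is
optimal for the LP with the same optimal value. -/
theorem stmt_14 (T n : ℕ) (c : Fin n → ℝ≥0) (leads : Fin n → Fin n → Prop)
    [DecidableRel leads] (μ₁ μT d : Fin n → ℝ≥0)
    (hfeas : ∃ M, otFeas T n μ₁ μT d M ∧ otObj T n c leads M ≠ ⊤) :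
    (∃ M, otFeas T n μ₁ μT d M ∧
        ∀ M', otFeas T n μ₁ μT d M' →
          otObj T n c leads M ≤ otObj T n c leads M') ∧
    ∀ M, (otFeas T n μ₁ μT d M ∧
        ∀ M', otFeas T n μ₁ μT d M' →
          otObj T n c leads M ≤ otObj T n c leads M') →
      otObj T n c leads M ≠ ⊤ ∧
      (∀ x, ¬ IsPath T n leads x → M x = 0) ∧
      lpFeas T n leads μ₁ μT d M ∧
      (lpObj T n c M : ℝ≥0∞) = otObj T n c leads M ∧
      ∀ xs, lpFeas T n leads μ₁ μT d xs → lpObj T n c M ≤ lpObj T n c xs := by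

  classical
  obtain ⟨M₀, hM₀feas, hM₀fin⟩ := hfeas
  -- supported-on-paths feasible set
  set K : Set ((Fin (T + 2) → Fin n) → ℝ≥0) :=
    {M | otFeas T n μ₁ μT d M ∧ ∀ x, ¬ IsPath T n leads x → M x = 0} with hK
  have hsupp₀ : ∀ x, ¬ IsPath T n leads x → M₀ x = 0 := by
    intro x hx
    by_contra h0
    exact hM₀fin (obj_top T n c leads M₀ x hx h0)
  have hKne : K.Nonempty := ⟨M₀, hM₀feas, hsupp₀⟩
  -- continuity of marginal maps
  have contmarg : ∀ (P : (Fin (T + 2) → Fin n) → Prop) [DecidablePred P],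
      Continuous (fun M : (Fin (T + 2) → Fin n) → ℝ≥0 =>
        ∑ x : Fin (T + 2) → Fin n, if P x then M x else 0) := by
    intro P _
    refine continuous_finset_sum _ (fun x _ => ?_)
    by_cases hP : P x
    · simpa [hP] using continuous_apply x
    · simpa [hP] using continuous_const
  have hKclosed : IsClosed K := by
    have e : K = ((⋂ i : Fin n, {M : (Fin (T + 2) → Fin n) → ℝ≥0 |
            (∑ x : Fin (T + 2) → Fin n, if x 0 = i then M x else 0) = μ₁ i}) ∩
          ((⋂ i : Fin n, {M : (Fin (T + 2) → Fin n) → ℝ≥0 |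
            (∑ x : Fin (T + 2) → Fin n,
              if x (Fin.last (T + 1)) = i then M x else 0) = μT i}) ∩
          ((⋂ t : Fin T, ⋂ i : Fin n, {M : (Fin (T + 2) → Fin n) → ℝ≥0 |
            (∑ x : Fin (T + 2) → Fin n,
              if x t.succ.castSucc = i then M x else 0) ≤ d i}) ∩
          (⋂ x : Fin (T + 2) → Fin n, {M : (Fin (T + 2) → Fin n) → ℝ≥0 |
            ¬ IsPath T n leads x → M x = 0})))) := by
      ext M
      simp only [hK, Set.mem_setOf_eq, Set.mem_inter_iff, Set.mem_iInter,
        Set.mem_setOf_eq, otFeas]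
      tauto
    rw [e]
    refine IsClosed.inter (isClosed_iInter fun i => isClosed_eq (contmarg _) continuous_const)
      (IsClosed.inter (isClosed_iInter fun i => isClosed_eq (contmarg _) continuous_const)
      (IsClosed.inter (isClosed_iInter fun t => isClosed_iInter fun i =>
        isClosed_le (contmarg _) continuous_const) ?_))
    refine isClosed_iInter fun x => ?_
    by_cases hx : IsPath T n leads x
    · simp [hx]
    · simpa [hx] using isClosed_eq (continuous_apply x) continuous_const
  -- K is bounded, hence compact
  have hKsub : K ⊆ Set.pi Set.univ (fun x => Set.Icc (0 : ℝ≥0) (μ₁ (x 0))) := by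
    intro M hM x _
    refine ⟨zero_le, ?_⟩
    have hmarg := hM.1.1 (x 0)
    calc M x = (if x 0 = x 0 then M x else 0) := by simp
      _ ≤ ∑ y : Fin (T + 2) → Fin n, if y 0 = x 0 then M y else 0 :=
          Finset.single_le_sum (f := fun y => if y 0 = x 0 then M y else 0)
            (fun _ _ => zero_le) (Finset.mem_univ x)
      _ = μ₁ (x 0) := hmarg
  have hKcomp : IsCompact K :=
    IsCompact.of_isClosed_subset (isCompact_univ_pi fun x => isCompact_Icc) hKclosed hKsub
  have contObj : Continuous (fun M : (Fin (T + 2) → Fin n) → ℝ≥0 => lpObj T n c M) :=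
    continuous_finset_sum _ (fun x _ => continuous_const.mul (continuous_apply x))
  obtain ⟨Mmin, hMminK, hmin⟩ := hKcomp.exists_isMinOn hKne contObj.continuousOn
  -- Mmin is optimal for the OT problem
  have hOTopt : ∀ M', otFeas T n μ₁ μT d M' →
      otObj T n c leads Mmin ≤ otObj T n c leads M' := by
    intro M' hM'
    by_cases hs : ∀ x, ¬ IsPath T n leads x → M' x = 0
    · have hM'K : M' ∈ K := ⟨hM', hs⟩
      rw [obj_eq_of_supported T n c leads Mmin hMminK.2,
        obj_eq_of_supported T n c leads M' hs]
      exact_mod_cast hmin hM'K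
    · push_neg at hs
      obtain ⟨x, hx, h0⟩ := hs
      rw [obj_top T n c leads M' x hx h0]
      exact le_top
  refine ⟨⟨Mmin, hMminK.1, hOTopt⟩, ?_⟩
  -- second part
  rintro M ⟨hMfeas, hMopt⟩
  have hfin : otObj T n c leads M ≠ ⊤ :=
    ne_top_of_le_ne_top hM₀fin (hMopt M₀ hM₀feas)
  have hsupp : ∀ x, ¬ IsPath T n leads x → M x = 0 := by
    intro x hx
    by_contra h0
    exact hfin (obj_top T n c leads M x hx h0)
  refine ⟨hfin, hsupp, ⟨hsupp, hMfeas⟩,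
    (obj_eq_of_supported T n c leads M hsupp).symm, ?_⟩
  intro xs hxs
  have h1 := hMopt xs hxs.2
  rw [obj_eq_of_supported T n c leads M hsupp,
    obj_eq_of_supported T n c leads xs hxs.1] at h1
  exact_mod_cast h1


end Stmt14
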